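/- For all integers m and k with 0 ≤ k ≤ m, k! · R_W(m, m−k) = ∑_{j=0}^{k} (−1)^{k−j} · C(k,j) · (j+1)^{⌈m/2⌉} · j^{⌊m/2⌋}, where 0^0 = 1. -/

import Mathlib

/-
Read a white square `(i, j)` in the coordinates (diagonal `i - j`, anti-diagonal `(i + j) / 2`):
nonattacking bishops become nonattacking rooks on a board whose `m` columns, suitably ordered,
have nested row sets, the `i`-th of size `i + (m - i) % 2` (a Ferrers board). Adjoin `x` new rows
to every column and count injective column-to-row maps in two ways. Column by column there are
`∏ i, (x + (m - i) % 2) = (x + 1) ^ ⌈m/2⌉ * x ^ ⌊m/2⌋` of them; sorted by the rooks that stay on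
the board there are `∑ t, R_W(m, t) * x (x - 1) ⋯ (x - m + t + 1)` (Goldman–Joichi–White).
So `(x + 1) ^ ⌈m/2⌉ * x ^ ⌊m/2⌋ = ∑ p, R_W(m, m - p) * p! * C(x, p)`, and the `k`-th forward
difference at `0` extracts `k! * R_W(m, m - k)`.
-/

open Finset

/-- `whiteCount m k` is the number of `k`-element subsets `P` of the white squares
`{(i,j) ∈ {1,…,m} × {1,…,m} : i+j even}` such that any two distinct elements `(i,j)`
and `(i',j')` of `P` satisfy `i+j ≠ i'+j'` and `i−j ≠ i'−j'` (nonattacking bishops on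
the white squares of the `m × m` board). -/
def whiteCount (m k : ℕ) : ℕ :=
  ((((Finset.Icc 1 m ×ˢ Finset.Icc 1 m).filter (fun a => Even (a.1 + a.2))).powersetCard
      k).filter
    (fun P => ∀ a ∈ P, ∀ b ∈ P, a ≠ b →
      a.1 + a.2 ≠ b.1 + b.2 ∧ (a.1 : ℤ) - a.2 ≠ (b.1 : ℤ) - b.2)).card

open Function
open scoped fwdDiff

theorem fwdDiff_iter_sum_mul_choose_zero (a : ℕ → ℤ) {n k : ℕ} (hk : k ≤ n) :
    (Δ_[1])^[k] (fun x : ℕ => ∑ p ∈ range (n + 1), a p * (x.choose p : ℤ)) 0 = a k := by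
  have hsum : (fun x : ℕ => ∑ p ∈ range (n + 1), a p * (x.choose p : ℤ)) =
      ∑ p ∈ range (n + 1), a p • fun x : ℕ => (x.choose p : ℤ) := by
    ext x
    simp [Finset.sum_apply]
  rw [hsum, fwdDiff_iter_finsetSum, Finset.sum_apply]
  simp only [fwdDiff_iter_const_smul, Pi.smul_apply, fwdDiff_iter_choose_zero, smul_eq_mul,
    mul_ite, mul_one, mul_zero, Finset.sum_ite_eq, mem_range]
  exact if_pos (Nat.lt_succ_of_le hk)

theorem prod_fin_add_mod_two (x : ℕ) :
    ∀ m : ℕ, ∏ i : Fin m, (x + (m - i) % 2) = (x + 1) ^ ((m + 1) / 2) * x ^ (m / 2)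
  | 0 => by simp
  | m + 1 => by
    rw [Fin.prod_univ_succ]
    simp only [Fin.val_zero, Fin.val_succ, Nat.add_sub_add_right, Nat.sub_zero,
      prod_fin_add_mod_two x m]
    obtain ⟨r, rfl | rfl⟩ := Nat.even_or_odd' m
    · rw [show (2 * r + 1) % 2 = 1 by omega, show (2 * r + 1 + 1) / 2 = r + 1 by omega,
        show (2 * r + 1) / 2 = r by omega, show 2 * r / 2 = r by omega]
      ring
    · rw [show (2 * r + 1 + 1) % 2 = 0 by omega, show (2 * r + 1 + 1 + 1) / 2 = r + 1 by omega,
        show (2 * r + 1 + 1) / 2 = r + 1 by omega, show (2 * r + 1) / 2 = r by omega]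
      ring

theorem card_filter_powersetCard_image {β γ : Type*} [DecidableEq γ] {s : Finset β}
    {g : β → γ} (hg : Set.InjOn g s) (p : Finset γ → Prop) [DecidablePred p] (t : ℕ) :
    #{P ∈ (s.image g).powersetCard t | p P} = #{Q ∈ s.powersetCard t | p (Q.image g)} := by
  rw [← card_image_of_injOn ((image_injOn_powerset_of_injOn hg).mono fun Q hQ =>
    mem_powerset.2 (mem_powersetCard.1 (mem_filter.1 hQ).1).1)]
  congr 1
  ext P
  simp only [mem_filter, mem_image, mem_powersetCard]
  constructor
  · rintro ⟨⟨hP, rfl⟩, hp⟩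
    obtain ⟨Q, hQ, rfl⟩ := subset_image_iff.1 hP
    exact ⟨Q, ⟨⟨hQ, (card_image_of_injOn (hg.mono (coe_subset.2 hQ))).symm⟩, hp⟩, rfl⟩
  · rintro ⟨Q, ⟨⟨hQ, rfl⟩, hp⟩, rfl⟩
    exact ⟨⟨image_subset_image hQ, card_image_of_injOn (hg.mono (coe_subset.2 hQ))⟩, hp⟩

section Chain

variable {α : Type*} [DecidableEq α]

theorem card_filter_injective_init_eq {n : ℕ} {T : Fin (n + 1) → Finset α} (hT : Monotone T)
    {g : Fin n → α} (hg : g ∈ Fintype.piFinset (Fin.init T)) (hginj : Injective g) :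
    #{f ∈ Fintype.piFinset T | Injective f ∧ Fin.init f = g} = #(T (Fin.last n)) - n := by
  have hsub : univ.image g ⊆ T (Fin.last n) := by
    simpa [image_subset_iff] using fun i => hT (Fin.le_last _) (Fintype.mem_piFinset.1 hg i)
  have hfib : {f ∈ Fintype.piFinset T | Injective f ∧ Fin.init f = g} =
      (T (Fin.last n) \ univ.image g).map
        ⟨Fin.snoc g, Fin.snoc_right_injective (α := fun _ => α) g⟩ := by
    ext f
    simp only [mem_filter, mem_map, mem_sdiff, mem_image, mem_univ, true_and, Embedding.coeFn_mk]
    constructor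
    · rintro ⟨hf, hinj, rfl⟩
      refine ⟨f (Fin.last n), ⟨Fintype.mem_piFinset.1 hf _, ?_⟩, Fin.snoc_init_self f⟩
      rw [← Fin.snoc_init_self f, Fin.snoc_injective_iff] at hinj
      simpa using hinj.2
    · rintro ⟨a, ⟨ha, hag⟩, rfl⟩
      refine ⟨?_, Fin.snoc_injective_iff.2 ⟨hginj, by simpa using hag⟩, Fin.init_snoc _ _⟩
      rw [Fin.mem_piFinset_iff_last_init]
      simpa using ⟨ha, Fintype.mem_piFinset.1 hg⟩
  rw [hfib, card_map, card_sdiff_of_subset hsub, card_image_of_injective _ hginj, card_univ,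
    Fintype.card_fin]

theorem card_filter_injective_piFinset_of_monotone :
    ∀ {n : ℕ} {T : Fin n → Finset α}, Monotone T →
      #{f ∈ Fintype.piFinset T | Injective f} = ∏ i, (#(T i) - i)
  | 0, T, _ => by simp [Injective]
  | n + 1, T, hT => by
    have hinit : ∀ f ∈ {f ∈ Fintype.piFinset T | Injective f},
        Fin.init f ∈ {g ∈ Fintype.piFinset (Fin.init T) | Injective g} := by
      intro f hf
      simp only [mem_filter, Fin.mem_piFinset_iff_last_init] at hf ⊢
      exact ⟨hf.1.2, hf.2.comp (Fin.castSucc_injective n)⟩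
    have hfiber : ∀ g ∈ {g ∈ Fintype.piFinset (Fin.init T) | Injective g},
        #{f ∈ {f ∈ Fintype.piFinset T | Injective f} | Fin.init f = g} =
          #(T (Fin.last n)) - n := fun g hg => by
      rw [filter_filter]
      exact card_filter_injective_init_eq hT (mem_filter.1 hg).1 (mem_filter.1 hg).2
    rw [card_eq_sum_card_fiberwise hinit, sum_congr rfl hfiber, sum_const, smul_eq_mul,
      card_filter_injective_piFinset_of_monotone (T := Fin.init T)
        (hT.comp Fin.strictMono_castSucc.monotone), Fin.prod_univ_castSucc]
    simp [Fin.init]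

end Chain

section Rooks

variable {ι α : Type*}

def IsNonattacking (P : Finset (ι × α)) : Prop :=
  (P : Set (ι × α)).Pairwise fun a b => a.1 ≠ b.1 ∧ a.2 ≠ b.2

instance [DecidableEq ι] [DecidableEq α] : DecidablePred (IsNonattacking (ι := ι) (α := α)) :=
  fun P => inferInstanceAs (Decidable ((P : Set (ι × α)).Pairwise _))

theorem IsNonattacking.injOn_fst {P : Finset (ι × α)} (hP : IsNonattacking P) :
    Set.InjOn Prod.fst (P : Set (ι × α)) := fun _ ha _ hb h =>
  by_contra fun hab => (hP ha hb hab).1 h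

theorem IsNonattacking.injOn_snd {P : Finset (ι × α)} (hP : IsNonattacking P) :
    Set.InjOn Prod.snd (P : Set (ι × α)) := fun _ ha _ hb h =>
  by_contra fun hab => (hP ha hb hab).2 h

variable [Fintype ι]

theorem IsNonattacking.card_le {P : Finset (ι × α)} (hP : IsNonattacking P) :
    #P ≤ Fintype.card ι :=
  card_le_card_of_injOn Prod.fst (fun _ _ => mem_coe.2 (mem_univ _)) hP.injOn_fst

variable [DecidableEq ι] [DecidableEq α]

def boardCells (B : ι → Finset α) : Finset (ι × α) := univ.biUnion fun i => {i} ×ˢ B i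

@[simp]
theorem mem_boardCells {B : ι → Finset α} {c : ι × α} : c ∈ boardCells B ↔ c.2 ∈ B c.1 := by
  simp [boardCells, Prod.ext_iff]

def rookNumber (B : ι → Finset α) (t : ℕ) : ℕ :=
  #{P ∈ (boardCells B).powersetCard t | IsNonattacking P}

def graphOn (B : ι → Finset α) (f : ι → α) : Finset (ι × α) :=
  ({i : ι | f i ∈ B i} : Finset ι).image fun i => (i, f i)

@[simp]
theorem mem_graphOn {B : ι → Finset α} {f : ι → α} {c : ι × α} :
    c ∈ graphOn B f ↔ f c.1 = c.2 ∧ c.2 ∈ B c.1 := by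
  simp only [graphOn, mem_image, mem_filter, mem_univ, true_and]
  constructor
  · rintro ⟨i, hi, rfl⟩
    exact ⟨rfl, hi⟩
  · rintro ⟨h, hc⟩
    exact ⟨c.1, h ▸ hc, Prod.ext rfl h⟩

theorem isNonattacking_graphOn (B : ι → Finset α) {f : ι → α} (hf : Injective f) :
    IsNonattacking (graphOn B f) := by
  intro a ha b hb hab
  simp only [mem_coe, mem_graphOn] at ha hb
  have h1 : a.1 ≠ b.1 := fun h => hab (Prod.ext h (by rw [← ha.1, ← hb.1, h]))
  exact ⟨h1, fun h => h1 (hf (by rw [ha.1, hb.1, h]))⟩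

variable {B : ι → Finset α} {E : Finset α}

theorem graphOn_eq_iff (hE : ∀ i, Disjoint (B i) E) {P : Finset (ι × α)}
    (hPB : P ⊆ boardCells B) {f : ι → α} :
    f ∈ Fintype.piFinset (fun i => B i ∪ E) ∧ graphOn B f = P ↔
      (∀ c ∈ P, f c.1 = c.2) ∧ ∀ i ∉ P.image Prod.fst, f i ∈ E := by
  constructor
  · rintro ⟨hf, rfl⟩
    refine ⟨fun c hc => (mem_graphOn.1 hc).1, fun i hi => ?_⟩
    refine (mem_union.1 (Fintype.mem_piFinset.1 hf i)).resolve_left fun hB => hi ?_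
    exact mem_image_of_mem Prod.fst (a := (i, f i)) (mem_graphOn.2 ⟨rfl, hB⟩)
  · rintro ⟨hP, hE'⟩
    have hB : ∀ i ∈ P.image Prod.fst, f i ∈ B i := by
      simp only [mem_image]
      rintro _ ⟨c, hc, rfl⟩
      exact hP c hc ▸ mem_boardCells.1 (hPB hc)
    refine ⟨Fintype.mem_piFinset.2 fun i => ?_, ?_⟩
    · by_cases hi : i ∈ P.image Prod.fst
      exacts [mem_union_left _ (hB i hi), mem_union_right _ (hE' i hi)]
    ext c
    rw [mem_graphOn]
    constructor
    · rintro ⟨hfc, hcB⟩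
      by_cases hi : c.1 ∈ P.image Prod.fst
      · obtain ⟨d, hd, hdc⟩ := mem_image.1 hi
        have : d = c := Prod.ext hdc (by rw [← hP d hd, hdc, hfc])
        exact this ▸ hd
      · exact absurd (hfc ▸ hE' _ hi) (disjoint_left.1 (hE c.1) hcB)
    · intro hc
      exact ⟨hP c hc, mem_boardCells.1 (hPB hc)⟩

theorem IsNonattacking.exists_injective_extend {P : Finset (ι × α)} (hP : IsNonattacking P)
    (hPB : P ⊆ boardCells B) (hE : ∀ i, Disjoint (B i) E)
    (g : {i // i ∉ P.image Prod.fst} ↪ E) :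
    ∃ f : ι → α, Injective f ∧ (∀ c ∈ P, f c.1 = c.2) ∧
      ∀ i (hi : i ∉ P.image Prod.fst), f i = g ⟨i, hi⟩ := by
  choose c hcP hci using fun i (hi : i ∈ P.image Prod.fst) => mem_image.1 hi
  let f : ι → α := fun i => if hi : i ∈ P.image Prod.fst then (c i hi).2 else g ⟨i, hi⟩
  have hfB : ∀ i ∈ P.image Prod.fst, f i ∈ B i := fun i hi => by
    simpa only [f, dif_pos hi, hci i hi] using mem_boardCells.1 (hPB (hcP i hi))
  have hfE : ∀ i (hi : i ∉ P.image Prod.fst), f i = g ⟨i, hi⟩ := fun i hi => dif_neg hi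
  have hfP : ∀ d ∈ P, f d.1 = d.2 := by
    intro d hd
    have hdS : d.1 ∈ P.image Prod.fst := mem_image_of_mem _ hd
    simp only [f, dif_pos hdS]
    rw [hP.injOn_fst (hcP _ hdS) hd (hci _ hdS)]
  refine ⟨f, fun i j hij => ?_, hfP, hfE⟩
  by_cases hi : i ∈ P.image Prod.fst <;> by_cases hj : j ∈ P.image Prod.fst
  · simp only [f, dif_pos hi, dif_pos hj] at hij
    rw [← hci i hi, ← hci j hj, hP.injOn_snd (hcP i hi) (hcP j hj) hij]
  · exact absurd (hij ▸ hfE j hj ▸ (g ⟨j, hj⟩).2) (disjoint_left.1 (hE i) (hfB i hi))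
  · exact absurd (hij ▸ hfE i hi ▸ (g ⟨i, hi⟩).2) (disjoint_left.1 (hE j) (hfB j hj))
  · rw [hfE i hi, hfE j hj] at hij
    exact congrArg Subtype.val (g.injective (Subtype.ext hij))

theorem card_graphOn_fiber (hE : ∀ i, Disjoint (B i) E) {P : Finset (ι × α)}
    (hPB : P ⊆ boardCells B) (hP : IsNonattacking P) :
    #{f ∈ Fintype.piFinset (fun i => B i ∪ E) | Injective f ∧ graphOn B f = P} =
      (#E).descFactorial (Fintype.card ι - #P) := by
  set S := P.image Prod.fst
  have hmem : ∀ f, f ∈ {f ∈ Fintype.piFinset (fun i => B i ∪ E) | Injective f ∧ graphOn B f = P}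
      ↔ Injective f ∧ (∀ c ∈ P, f c.1 = c.2) ∧ ∀ i ∉ S, f i ∈ E := fun f => by
    rw [mem_filter, ← graphOn_eq_iff hE hPB]
    tauto
  have hS : Fintype.card {i // i ∉ S} = Fintype.card ι - #P := by
    rw [Fintype.card_subtype_compl, Fintype.card_coe, card_image_of_injOn hP.injOn_fst]
  rw [← hS, ← Fintype.card_coe E, ← Fintype.card_embedding_eq, ← card_univ]
  refine card_bij (fun f hf => ⟨fun i => ⟨f i, ((hmem f).1 hf).2.2 i i.2⟩,
      fun i j h => Subtype.ext (((hmem f).1 hf).1 (congrArg Subtype.val h))⟩)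
    (fun _ _ => mem_univ _) ?_ ?_
  · intro f hf f' hf' h
    funext i
    by_cases hi : i ∈ S
    · obtain ⟨c, hc, rfl⟩ := mem_image.1 hi
      rw [((hmem f).1 hf).2.1 c hc, ((hmem f').1 hf').2.1 c hc]
    · exact congrArg Subtype.val (DFunLike.congr_fun h ⟨i, hi⟩)
  · intro g _
    obtain ⟨f, hinj, hfP, hfE⟩ := hP.exists_injective_extend hPB hE g
    refine ⟨f, (hmem f).2 ⟨hinj, hfP, fun i hi => hfE i hi ▸ (g ⟨i, hi⟩).2⟩, ?_⟩
    ext i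
    exact hfE i i.2

theorem card_injective_piFinset_union_eq_sum_rookNumber (hE : ∀ i, Disjoint (B i) E) :
    #{f ∈ Fintype.piFinset (fun i => B i ∪ E) | Injective f} =
      ∑ t ∈ range (Fintype.card ι + 1),
        rookNumber B t * (#E).descFactorial (Fintype.card ι - t) := by
  have hgraph : ∀ f ∈ {f ∈ Fintype.piFinset (fun i => B i ∪ E) | Injective f},
      graphOn B f ∈ {P ∈ (boardCells B).powerset | IsNonattacking P} := fun f hf =>
    mem_filter.2 ⟨mem_powerset.2 fun c hc => mem_boardCells.2 (mem_graphOn.1 hc).2,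
      isNonattacking_graphOn B (mem_filter.1 hf).2⟩
  have hcard : ∀ P ∈ {P ∈ (boardCells B).powerset | IsNonattacking P},
      #P ∈ range (Fintype.card ι + 1) := fun P hP =>
    mem_range_succ_iff.2 (mem_filter.1 hP).2.card_le
  rw [card_eq_sum_card_fiberwise hgraph, ← sum_fiberwise_of_maps_to hcard]
  refine sum_congr rfl fun t _ => ?_
  have hfiber : ∀ P ∈ {P ∈ {P ∈ (boardCells B).powerset | IsNonattacking P} | #P = t},
      #{f ∈ {f ∈ Fintype.piFinset (fun i => B i ∪ E) | Injective f} | graphOn B f = P} =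
        (#E).descFactorial (Fintype.card ι - t) := by
    intro P hP
    simp only [mem_filter, mem_powerset] at hP
    rw [filter_filter, card_graphOn_fiber hE hP.1.1 hP.1.2, hP.2]
  rw [sum_congr rfl hfiber, sum_const, smul_eq_mul, rookNumber, powersetCard_eq_filter,
    filter_comm]

end Rooks

/- Column `i` of the board is the diagonal `a.1 - a.2 = m - i` of white squares `a` when `m - i`
is even and the diagonal `a.1 - a.2 = i + 1 - m` otherwise, which sorts the diagonals by length;
row `s` is the anti-diagonal `a.1 + a.2 = 2 * s`. -/
def whiteBoard (m : ℕ) (i : Fin m) : Finset ℕ := Icc ((m - i) / 2 + 1) (m - (m - i) / 2)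

def diagToSquare (m : ℕ) (c : Fin m × ℕ) : ℕ × ℕ :=
  if (m - c.1) % 2 = 0 then (c.2 + (m - c.1) / 2, c.2 - (m - c.1) / 2)
  else (c.2 - (m - c.1) / 2, c.2 + (m - c.1) / 2)

section WhiteBoard

variable {m : ℕ}

theorem mem_boardCells_whiteBoard {c : Fin m × ℕ} :
    c ∈ boardCells (whiteBoard m) ↔ (m - c.1) / 2 + 1 ≤ c.2 ∧ c.2 ≤ m - (m - c.1) / 2 := by
  rw [mem_boardCells, whiteBoard, mem_Icc]

theorem diagToSquare_add_eq_iff {c d : Fin m × ℕ} (hc : c ∈ boardCells (whiteBoard m))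
    (hd : d ∈ boardCells (whiteBoard m)) :
    (diagToSquare m c).1 + (diagToSquare m c).2 = (diagToSquare m d).1 + (diagToSquare m d).2 ↔
      c.2 = d.2 := by
  rw [mem_boardCells_whiteBoard] at hc hd
  unfold diagToSquare
  split_ifs <;> omega

theorem diagToSquare_sub_eq_iff {c d : Fin m × ℕ} (hc : c ∈ boardCells (whiteBoard m))
    (hd : d ∈ boardCells (whiteBoard m)) :
    ((diagToSquare m c).1 : ℤ) - (diagToSquare m c).2 =
        ((diagToSquare m d).1 : ℤ) - (diagToSquare m d).2 ↔ c.1 = d.1 := by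
  rw [mem_boardCells_whiteBoard] at hc hd
  have := c.1.isLt
  have := d.1.isLt
  rw [Fin.ext_iff]
  unfold diagToSquare
  split_ifs <;> omega

theorem injOn_diagToSquare : Set.InjOn (diagToSquare m) (boardCells (whiteBoard m)) := by
  intro c hc d hd h
  exact Prod.ext ((diagToSquare_sub_eq_iff hc hd).1 (by rw [h]))
    ((diagToSquare_add_eq_iff hc hd).1 (by rw [h]))

theorem image_diagToSquare :
    (boardCells (whiteBoard m)).image (diagToSquare m) =
      {a ∈ Icc 1 m ×ˢ Icc 1 m | Even (a.1 + a.2)} := by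
  ext a
  simp only [mem_image, mem_filter, mem_product, mem_Icc, Nat.even_iff]
  constructor
  · rintro ⟨c, hc, rfl⟩
    rw [mem_boardCells_whiteBoard] at hc
    unfold diagToSquare
    split_ifs <;> omega
  · intro ha
    obtain ⟨c, hc⟩ : ∃ c, c = if a.2 < a.1 then m - (a.1 - a.2) else m - 1 - (a.2 - a.1) :=
      ⟨_, rfl⟩
    have hcm : c < m := by split_ifs at hc <;> omega
    refine ⟨(⟨c, hcm⟩, (a.1 + a.2) / 2), ?_, ?_⟩
    · rw [mem_boardCells_whiteBoard]
      split_ifs at hc <;> dsimp only <;> omega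
    · unfold diagToSquare
      split_ifs at hc ⊢ <;> ext <;> dsimp only at * <;> omega

end WhiteBoard

theorem whiteCount_eq_rookNumber (m t : ℕ) : whiteCount m t = rookNumber (whiteBoard m) t := by
  rw [whiteCount, ← image_diagToSquare, card_filter_powersetCard_image injOn_diagToSquare,
    rookNumber]
  refine congrArg card (filter_congr fun Q hQ => ?_)
  have hQB : Q ⊆ boardCells (whiteBoard m) := (mem_powersetCard.1 hQ).1
  change ((Q.image (diagToSquare m) : Finset (ℕ × ℕ)) : Set (ℕ × ℕ)).Pairwise
    (fun a b => a.1 + a.2 ≠ b.1 + b.2 ∧ (a.1 : ℤ) - a.2 ≠ (b.1 : ℤ) - b.2) ↔ IsNonattacking Q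
  rw [coe_image, (injOn_diagToSquare.mono (coe_subset.2 hQB)).pairwise_image]
  constructor <;> intro h c hc d hd hcd <;> have := h hc hd hcd <;>
    simp only [onFun, ne_eq, diagToSquare_add_eq_iff (hQB hc) (hQB hd),
      diagToSquare_sub_eq_iff (hQB hc) (hQB hd)] at this ⊢ <;> tauto

theorem monotone_whiteBoard (m : ℕ) : Monotone (whiteBoard m) := fun i j hij =>
  Icc_subset_Icc (by omega) (by omega)

theorem disjoint_whiteBoard (m x : ℕ) (i : Fin m) :
    Disjoint (whiteBoard m i) (Icc (m + 1) (m + x)) := by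
  rw [whiteBoard, disjoint_left]
  intro a ha hb
  rw [mem_Icc] at ha hb
  omega

theorem card_whiteBoard_union_sub (m x : ℕ) (i : Fin m) :
    #(whiteBoard m i ∪ Icc (m + 1) (m + x)) - i = x + (m - i) % 2 := by
  rw [card_union_of_disjoint (disjoint_whiteBoard m x i), whiteBoard, Nat.card_Icc, Nat.card_Icc]
  have := i.isLt
  omega

theorem sum_whiteCount_mul_descFactorial (m x : ℕ) :
    ∑ t ∈ range (m + 1), whiteCount m t * x.descFactorial (m - t) =
      (x + 1) ^ ((m + 1) / 2) * x ^ (m / 2) := by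
  calc ∑ t ∈ range (m + 1), whiteCount m t * x.descFactorial (m - t)
      = #{f ∈ Fintype.piFinset (fun i => whiteBoard m i ∪ Icc (m + 1) (m + x)) | Injective f} := by
        rw [card_injective_piFinset_union_eq_sum_rookNumber (disjoint_whiteBoard m x),
          Fintype.card_fin, Nat.card_Icc, show m + x + 1 - (m + 1) = x by omega]
        simp only [whiteCount_eq_rookNumber]
    _ = ∏ i : Fin m, (x + (m - i) % 2) := by
        rw [card_filter_injective_piFinset_of_monotone
          fun i j hij => union_subset_union_left (monotone_whiteBoard m hij)]
        exact prod_congr rfl fun i _ => card_whiteBoard_union_sub m x i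
    _ = (x + 1) ^ ((m + 1) / 2) * x ^ (m / 2) := prod_fin_add_mod_two x m

/-- Arshon's expression: for `0 ≤ k ≤ m`,
`k! · R_W(m, m−k) = ∑_{j=0}^{k} (−1)^{k−j} C(k,j) (j+1)^{⌈m/2⌉} j^{⌊m/2⌋}` (with `0^0 = 1`). -/
theorem white_bishop_arshon (m k : ℕ) (hk : k ≤ m) :
    (Nat.factorial k * whiteCount m (m - k) : ℤ) =
      ∑ j ∈ Finset.range (k + 1),
        (-1 : ℤ) ^ (k - j) * Nat.choose k j * ((j : ℤ) + 1) ^ ((m + 1) / 2) *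
          (j : ℤ) ^ (m / 2) := by
  have hnewton : ∀ x : ℕ, ((x : ℤ) + 1) ^ ((m + 1) / 2) * (x : ℤ) ^ (m / 2) =
      ∑ p ∈ range (m + 1), (whiteCount m (m - p) * p.factorial : ℤ) * (x.choose p : ℤ) := by
    intro x
    rw [← sum_range_reflect]
    exact_mod_cast (sum_whiteCount_mul_descFactorial m x).symm.trans (sum_congr rfl fun t ht => by
      rw [Nat.descFactorial_eq_factorial_mul_choose, Nat.add_sub_cancel,
        Nat.sub_sub_self (Nat.lt_succ_iff.1 (mem_range.1 ht)), mul_assoc])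
  calc (Nat.factorial k * whiteCount m (m - k) : ℤ)
      = (Δ_[1])^[k] (fun x : ℕ =>
          ∑ p ∈ range (m + 1), (whiteCount m (m - p) * p.factorial : ℤ) * (x.choose p : ℤ)) 0 := by
        rw [fwdDiff_iter_sum_mul_choose_zero _ hk, mul_comm]
    _ = (Δ_[1])^[k] (fun x : ℕ => ((x : ℤ) + 1) ^ ((m + 1) / 2) * (x : ℤ) ^ (m / 2)) 0 := by
        simp only [hnewton]
    _ = _ := by
        rw [fwdDiff_iter_eq_sum_shift]
        simp [mul_assoc]
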